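/- arXiv:2410.22415 — 3 statements merged into one kernel-verified Lean document; each statement's English description precedes it below -/
import Mathlib

section
/- Let D be a natural number with D ≥ 4 and let α be a real number with (D:ℝ) + α > 0. Consider the spectrum consisting of D−1 entries equal to 1/(D+α) and one entry equal to (1+α)/(D+α); its three smallest entries are λ₀ = min((1+α)/(D+α), 1/(D+α)), λ₁ = λ₂ = 1/(D+α), and its largest entry is λ_top = max((1+α)/(D+α), 1/(D+α)). Then the real 2×2 matrix !![2*λ₀, λ₁ − λ_top; λ₁ − λ_top, 2*λ₂] is positive semidefinite if and only if −1 ≤ α ∧ α ≤ 2. -/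
/-!
A real symmetric 2×2 matrix is positive semidefinite iff its diagonal is nonnegative and its
determinant is. For the spectrum `(p, q, q, …)` with `p = (1+α)/(D+α)`, `q = 1/(D+α)`, the block
is diagonal when `p ≤ q`, so it is PSD iff `p ≥ 0`; when `p ≥ q` the determinant condition reads
`(p - q)² ≤ 4q²`, i.e. `p ≤ 3q`. Altogether `0 ≤ p ≤ 3q`, which is `0 ≤ 1 + α ≤ 3`.
-/

open Matrix

theorem Matrix.posSemidef_fin_two_iff {a b c : ℝ} :
    PosSemidef !![a, b; b, c] ↔ 0 ≤ a ∧ 0 ≤ c ∧ b ^ 2 ≤ a * c := by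
  constructor
  · intro h
    refine ⟨by simpa using h.diag_nonneg (i := 0), by simpa using h.diag_nonneg (i := 1), ?_⟩
    have hdet := h.det_nonneg
    rw [det_fin_two_of] at hdet
    linarith
  · rintro ⟨ha, hc, hb⟩
    refine .of_dotProduct_mulVec_nonneg ?_ fun x => ?_
    · ext i j
      fin_cases i <;> fin_cases j <;> rfl
    · have hform : star x ⬝ᵥ (!![a, b; b, c] *ᵥ x) =
          a * x 0 ^ 2 + 2 * b * x 0 * x 1 + c * x 1 ^ 2 := by
        simp [dotProduct, mulVec, Fin.sum_univ_two]
        ring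
      rw [hform]
      rcases ha.eq_or_lt with rfl | ha
      · obtain rfl : b = 0 := by nlinarith
        nlinarith [sq_nonneg (x 1)]
      · -- completing the square: `a • Q(x) = (a x₀ + b x₁)² + (a c - b²) x₁²`
        refine nonneg_of_mul_nonneg_right ?_ ha
        nlinarith [sq_nonneg (a * x 0 + b * x 1), sq_nonneg (x 1)]

theorem hildebrandBlock_posSemidef_iff {p q : ℝ} :
    PosSemidef !![2 * min p q, q - max p q; q - max p q, 2 * q] ↔ 0 ≤ p ∧ p ≤ 3 * q := by
  rw [Matrix.posSemidef_fin_two_iff]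
  rcases le_total p q with hpq | hqp
  · rw [min_eq_left hpq, max_eq_right hpq, sub_self]
    constructor
    · rintro ⟨hp, -, -⟩
      constructor <;> linarith
    · rintro ⟨hp, -⟩
      exact ⟨by linarith, by linarith, by nlinarith⟩
  · rw [min_eq_right hqp, max_eq_left hqp]
    constructor
    · rintro ⟨hq, -, hdet⟩
      constructor <;> nlinarith
    · rintro ⟨hp, h3q⟩
      exact ⟨by linarith, by linarith, by nlinarith⟩

theorem hildebrand_block_psd_iff_general (D : ℕ) (α : ℝ)
    (hα : (D : ℝ) + α > 0) :
    (Matrix.PosSemidef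
      !![2 * min ((1 + α) / ((D : ℝ) + α)) (1 / ((D : ℝ) + α)),
           1 / ((D : ℝ) + α) - max ((1 + α) / ((D : ℝ) + α)) (1 / ((D : ℝ) + α));
         1 / ((D : ℝ) + α) - max ((1 + α) / ((D : ℝ) + α)) (1 / ((D : ℝ) + α)),
           2 * (1 / ((D : ℝ) + α))]) ↔ (-1 ≤ α ∧ α ≤ 2) := by
  rw [hildebrandBlock_posSemidef_iff, mul_one_div, div_le_div_iff_of_pos_right hα,
    le_div_iff₀ hα, zero_mul]
  constructor <;> rintro ⟨h₁, h₂⟩ <;> constructor <;> linarith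

/-- The first 2×2 block of Hildebrand's LMI, evaluated on the spectrum of the
normalized image of a pure state under the reduction-like map `Λ_α`, is positive
semidefinite exactly for `α ∈ [−1, 2]`. -/
theorem hildebrand_block_psd_iff (D : ℕ) (hD : 4 ≤ D) (α : ℝ)
    (hα : (D : ℝ) + α > 0) :
    (Matrix.PosSemidef
      !![2 * min ((1 + α) / ((D : ℝ) + α)) (1 / ((D : ℝ) + α)),
           1 / ((D : ℝ) + α) - max ((1 + α) / ((D : ℝ) + α)) (1 / ((D : ℝ) + α));
         1 / ((D : ℝ) + α) - max ((1 + α) / ((D : ℝ) + α)) (1 / ((D : ℝ) + α)),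
           2 * (1 / ((D : ℝ) + α))]) ↔ (-1 ≤ α ∧ α ≤ 2) :=
  hildebrand_block_psd_iff_general D α hα
end

section
/- Let D be a natural number with D ≥ 2 and set m = (D+1)/3 (natural-number division, i.e. m = ⌊(D+1)/3⌋). Let v₊ : Fin D → ℝ be the vector with one entry equal to 3/(D+2) and all other entries equal to 1/(D+2), and let v₋ : Fin D → ℝ be the vector with one entry equal to 0 and all other entries equal to 1/(D−1). Let K ⊆ (Fin D → ℝ) be the set of all coordinate permutations of v₊ and of v₋. If λ : Fin D → ℝ is monotone nondecreasing and λ belongs to the convex hull (over ℝ) of K, then 3 * (∑ i < m, λ i) + ((D:ℝ) + 2 − 3*m) * λ m ≥ 1. -/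
/-!
The left-hand side is `w ⬝ᵥ λ` for the weights `w = (3, …, 3, D + 2 - 3m, 0, …, 0)`, which lie
in `[0, 3]` (as `D ≤ 3m + 1 ≤ D + 2`) and sum to `D + 2`. This linear functional is at least `1` at
every permuted vertex, hence on their convex hull: at a permutation of `v₊` whose large entry
sits at `j` it equals `1 + 2 w_j / (D + 2)`, and at one of `v₋` with its zero at `j` it equals
`(D + 2 - w_j) / (D - 1)`.
-/

open Finset

theorem dotProduct_ite_eq {ι : Type*} [Fintype ι] [DecidableEq ι] (w : ι → ℝ) (j : ι)
    (a b : ℝ) : w ⬝ᵥ (fun i => if i = j then a else b) = b * ∑ i, w i + (a - b) * w j := by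
  have : (fun i => if i = j then a else b) = Function.const ι b + Pi.single j (a - b) := by
    ext i; by_cases h : i = j <;> simp [h]
  rw [this, dotProduct_add, dotProduct_single, ← smul_eq_mul]
  simp [dotProduct, Finset.mul_sum, mul_comm]

theorem ite_eq_comp_perm {ι α : Type*} [DecidableEq ι] (π : Equiv.Perm ι) (z : ι) (a b : α) :
    (fun i => if i = z then a else b) ∘ π = fun i => if i = π.symm z then a else b := by
  ext i; simp [← Equiv.eq_symm_apply]

section Vertices

variable {ι : Type*} [Fintype ι] [DecidableEq ι] {w : ι → ℝ} {d : ℝ}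

theorem one_le_dotProduct_ite_of_nonneg (hd : 0 < d + 2) (hsum : ∑ i, w i = d + 2) (j : ι)
    (hj : 0 ≤ w j) : 1 ≤ w ⬝ᵥ (fun i => if i = j then 3 / (d + 2) else 1 / (d + 2)) := by
  rw [dotProduct_ite_eq, hsum]
  field_simp
  linarith

theorem one_le_dotProduct_ite_of_le_three (hd : 1 < d) (hsum : ∑ i, w i = d + 2) (j : ι)
    (hj : w j ≤ 3) : 1 ≤ w ⬝ᵥ (fun i => if i = j then 0 else 1 / (d - 1)) := by
  rw [dotProduct_ite_eq, hsum]
  have : 0 < d - 1 := by linarith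
  field_simp
  linarith

theorem one_le_dotProduct_of_mem_convexHull (hd : 1 < d) (hw : ∀ i, w i ∈ Set.Icc 0 3)
    (hsum : ∑ i, w i = d + 2) (z : ι) {v : ι → ℝ}
    (hv : v ∈ convexHull ℝ {v : ι → ℝ | ∃ π : Equiv.Perm ι,
        v = (fun i => if i = z then 3 / (d + 2) else 1 / (d + 2)) ∘ π ∨
        v = (fun i => if i = z then 0 else 1 / (d - 1)) ∘ π}) :
    1 ≤ w ⬝ᵥ v := by
  have hlin : IsLinearMap ℝ (w ⬝ᵥ ·) := ⟨dotProduct_add w, fun c v => dotProduct_smul c w v⟩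
  refine convexHull_min ?_ (convex_halfSpace_ge hlin 1) hv
  rintro _ ⟨π, rfl | rfl⟩ <;> rw [Set.mem_ofPred_eq, ite_eq_comp_perm]
  · exact one_le_dotProduct_ite_of_nonneg (by linarith) hsum _ (hw _).1
  · exact one_le_dotProduct_ite_of_le_three hd hsum _ (hw _).2

end Vertices

def stepWeights {n : ℕ} (m : ℕ) (a c : ℝ) : Fin n → ℝ :=
  fun i => if (i : ℕ) < m then a else if (i : ℕ) = m then c else 0

theorem stepWeights_dotProduct {n m : ℕ} (hm : m < n) (a c : ℝ) (v : Fin n → ℝ) :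
    stepWeights m a c ⬝ᵥ v = a * ∑ i ∈ univ.filter (fun i : Fin n => (i : ℕ) < m), v i
      + c * v ⟨m, hm⟩ := by
  simp only [dotProduct, stepWeights, ite_mul, zero_mul, sum_ite, mul_sum]
  have hsingle : univ.filter (fun i : Fin n => ¬(i : ℕ) < m ∧ (i : ℕ) = m) = {⟨m, hm⟩} := by
    ext i; simp [Fin.ext_iff]; omega
  rw [sum_const_zero, add_zero, filter_filter, hsingle, sum_singleton]

theorem sum_stepWeights {n m : ℕ} (hm : m < n) (a c : ℝ) :
    ∑ i, stepWeights (n := n) m a c i = a * m + c := by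
  rw [← dotProduct_one, stepWeights_dotProduct hm]
  simp [Fin.card_filter_val_lt, hm.le]

/-- Proposition 1 (Eq. (7)): any nondecreasingly ordered spectrum in the convex hull of
all coordinate permutations of the two extremal vertices `v₊` and `v₋` satisfies
`3·∑_{i<m} λ_i + (D+2−3m)·λ_m ≥ 1`, where `m = ⌊(D+1)/3⌋`. -/
theorem convex_hull_two_simplex_inequality (D : ℕ) (hD : 2 ≤ D)
    (lam : Fin D → ℝ)
    (hhull : lam ∈ convexHull ℝ
      {v : Fin D → ℝ | ∃ π : Equiv.Perm (Fin D),
        v = (fun i => if i = (⟨0, by omega⟩ : Fin D) then 3 / ((D : ℝ) + 2)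
              else 1 / ((D : ℝ) + 2)) ∘ π ∨
        v = (fun i => if i = (⟨0, by omega⟩ : Fin D) then 0
              else 1 / ((D : ℝ) - 1)) ∘ π}) :
    3 * (∑ i ∈ Finset.univ.filter (fun i : Fin D => (i : ℕ) < (D + 1) / 3), lam i)
      + ((D : ℝ) + 2 - 3 * (((D + 1) / 3 : ℕ) : ℝ)) * lam ⟨(D + 1) / 3, by omega⟩ ≥ 1 := by
  set m := (D + 1) / 3
  have hm : m < D := by omega
  have hD' : (1 : ℝ) < D := by exact_mod_cast hD
  have hm₁ : (3 : ℝ) * m ≤ D + 1 := by exact_mod_cast (show 3 * m ≤ D + 1 by omega)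
  have hm₂ : (D : ℝ) ≤ 3 * m + 1 := by exact_mod_cast (show D ≤ 3 * m + 1 by omega)
  have hw : ∀ i, stepWeights (n := D) m 3 ((D : ℝ) + 2 - 3 * m) i ∈ Set.Icc 0 3 := by
    intro i; unfold stepWeights; split_ifs <;> constructor <;> linarith
  have hsum := sum_stepWeights hm 3 ((D : ℝ) + 2 - 3 * m)
  rw [show (3 : ℝ) * m + (D + 2 - 3 * m) = D + 2 by ring] at hsum
  have key := one_le_dotProduct_of_mem_convexHull hD' hw hsum _ hhull
  rwa [stepWeights_dotProduct hm] at key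
end

section
/- Let d, m, k be natural numbers with d ≥ 1. Let σ : Matrix ((Fin m → Fin d) × (Fin k → Fin d)) ((Fin m → Fin d) × (Fin k → Fin d)) ℂ be positive semidefinite and suppose σ − (1/((d:ℝ)^(m+k) + 2) : ℂ) • 1 is positive semidefinite. Define the partial trace τ : Matrix (Fin m → Fin d) (Fin m → Fin d) ℂ by τ a b = ∑ c : Fin k → Fin d, σ (a, c) (b, c). Then τ − (1/((d:ℝ)^m + 2) : ℂ) • 1 is positive semidefinite. -/
open Matrix ComplexOrder

namespace Matrix

variable {α β R : Type*} [Fintype β]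

def partialTraceRight [AddCommMonoid R] (M : Matrix (α × β) (α × β) R) : Matrix α α R :=
  of fun a b => ∑ c, M (a, c) (b, c)

section Ring

variable [Ring R]

theorem partialTraceRight_eq_sum_submatrix (M : Matrix (α × β) (α × β) R) :
    M.partialTraceRight = ∑ c, M.submatrix (·, c) (·, c) := by
  ext a b
  simp [partialTraceRight, Matrix.sum_apply]

theorem partialTraceRight_sub (M N : Matrix (α × β) (α × β) R) :
    (M - N).partialTraceRight = M.partialTraceRight - N.partialTraceRight := by
  ext a b
  simp [partialTraceRight, Finset.sum_sub_distrib]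

theorem partialTraceRight_smul (r : R) (M : Matrix (α × β) (α × β) R) :
    (r • M).partialTraceRight = r • M.partialTraceRight := by
  ext a b
  simp [partialTraceRight, Finset.mul_sum]

theorem partialTraceRight_one [DecidableEq α] [DecidableEq β] :
    (1 : Matrix (α × β) (α × β) R).partialTraceRight = (Fintype.card β : R) • 1 := by
  ext a b
  by_cases hab : a = b <;> simp [partialTraceRight, one_apply, hab]

theorem PosSemidef.partialTraceRight [PartialOrder R] [StarRing R] [AddLeftMono R]
    {M : Matrix (α × β) (α × β) R} (hM : M.PosSemidef) : M.partialTraceRight.PosSemidef := by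
  rw [partialTraceRight_eq_sum_submatrix]
  exact posSemidef_sum _ fun c _ => hM.submatrix (·, c)

theorem PosSemidef.sub_smul_one_of_le [PartialOrder R] [StarRing R] [StarOrderedRing R]
    [Fintype α] [DecidableEq α] {A : Matrix α α R} {a b : R} (hA : (A - a • 1).PosSemidef)
    (hba : b ≤ a) : (A - b • 1).PosSemidef := by
  have hgap : ((a - b) • (1 : Matrix α α R)).PosSemidef := by
    rw [smul_one_eq_diagonal]
    exact .diagonal fun _ => sub_nonneg.mpr hba
  simpa [sub_smul] using hA.add hgap

end Ring

end Matrix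

theorem one_div_pow_add_two_le_pow_div_pow_add_two {K : Type*} [Field K] [LinearOrder K]
    [IsStrictOrderedRing K] {x : K} (hx : 1 ≤ x) (m k : ℕ) :
    1 / (x ^ m + 2) ≤ x ^ k / (x ^ (m + k) + 2) := by
  have hxk : 1 ≤ x ^ k := one_le_pow₀ hx
  have hxm : 0 ≤ x ^ m := pow_nonneg (zero_le_one.trans hx) m
  rw [div_le_div_iff₀ (by positivity) (by positivity), pow_add]
  nlinarith

theorem reduced_state_inverse_reduction_condition_general {d m k : ℕ} (hd : 1 ≤ d)
    (σ : Matrix ((Fin m → Fin d) × (Fin k → Fin d)) ((Fin m → Fin d) × (Fin k → Fin d)) ℂ)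
    (h : (σ - ((1 / ((d : ℝ) ^ (m + k) + 2) : ℝ) : ℂ) •
      (1 : Matrix ((Fin m → Fin d) × (Fin k → Fin d)) ((Fin m → Fin d) × (Fin k → Fin d)) ℂ)).PosSemidef) :
    ((Matrix.of fun a b : Fin m → Fin d => ∑ c : Fin k → Fin d, σ (a, c) (b, c)) -
      ((1 / ((d : ℝ) ^ m + 2) : ℝ) : ℂ) •
        (1 : Matrix (Fin m → Fin d) (Fin m → Fin d) ℂ)).PosSemidef := by
  have hτ := h.partialTraceRight
  rw [partialTraceRight_sub, partialTraceRight_smul, partialTraceRight_one, smul_smul] at hτ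
  refine hτ.sub_smul_one_of_le ?_
  have hcard : (Fintype.card (Fin k → Fin d) : ℂ) = ((d ^ k : ℝ) : ℂ) := by simp
  rw [hcard, ← Complex.ofReal_mul, Complex.real_le_real, mul_comm, ← mul_div_assoc, mul_one]
  exact one_div_pow_add_two_le_pow_div_pow_add_two (by exact_mod_cast hd) m k

/-- Eq. (9): if a state `σ` on `m + k` qudits of local dimension `d` satisfies
`σ ≥ 𝟙/(d^{m+k}+2)`, then its reduced state `τ` after tracing out `k` qudits
satisfies `τ ≥ 𝟙/(d^m+2)`. -/
theorem reduced_state_inverse_reduction_condition {d m k : ℕ} (hd : 1 ≤ d)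
    (σ : Matrix ((Fin m → Fin d) × (Fin k → Fin d)) ((Fin m → Fin d) × (Fin k → Fin d)) ℂ)
    (hσ : σ.PosSemidef)
    (h : (σ - ((1 / ((d : ℝ) ^ (m + k) + 2) : ℝ) : ℂ) •
      (1 : Matrix ((Fin m → Fin d) × (Fin k → Fin d)) ((Fin m → Fin d) × (Fin k → Fin d)) ℂ)).PosSemidef) :
    ((Matrix.of fun a b : Fin m → Fin d => ∑ c : Fin k → Fin d, σ (a, c) (b, c)) -
      ((1 / ((d : ℝ) ^ m + 2) : ℝ) : ℂ) •
        (1 : Matrix (Fin m → Fin d) (Fin m → Fin d) ℂ)).PosSemidef :=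
  reduced_state_inverse_reduction_condition_general hd σ h
end
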